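/- Let m ∈ S² with m₁² + m₂² > 0, let R ∈ SO(3) with |R₃₃| ≥ ρ > 0, and let c > 0. Then for all x ∈ R^3, |m × x|² + c |[R e₃]_× [e₃]_× x|² ≥ μ |x|² where μ := min( cρ²/2, (m₁² + m₂²) cρ² / (2 m₃² + cρ²) ) > 0. -/

import Mathlib

open Matrix

/-- The skew-symmetric cross-product matrix of `u ∈ ℝ³`. -/
def skew (u : Fin 3 → ℝ) : Matrix (Fin 3) (Fin 3) ℝ :=
  !![0, -u 2, u 1; u 2, 0, -u 0; -u 1, u 0, 0]

/-- The third standard basis vector of `ℝ³`. -/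
def e3 : Fin 3 → ℝ := ![0, 0, 1]

/-- Sum of squares of the components of a vector in `ℝ³` (the squared Euclidean norm). -/
def sq3 (u : Fin 3 → ℝ) : ℝ := u 0 ^ 2 + u 1 ^ 2 + u 2 ^ 2

/- Everything reduces to a 2 × 2 eigenvalue bound. Since `|m × x|² = |x|² - (m·x)²` and, for
`r = R e₃`, `|r × (e₃ × x)|² ≥ R₃₃² (x₁² + x₂²) ≥ ρ² (x₁² + x₂²)`, it suffices to bound the
quadratic form `|x|² - (m·x)² + d (x₁² + x₂²)`, `d = cρ²`, from below. After a rotation about `e₃` taking `m` to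
`(√s, 0, t)` with `s = m₁² + m₂²`, `t = m₃`, its matrix splits off the eigenvalue `1 + d` and leaves
`[[t² + d, -√s t], [-√s t, s]]`, whose characteristic polynomial is `λ² - (1 + d) λ + s d`.
The two terms of `μ` are the two ways of showing that `μ` lies below its smaller root. -/

lemma sq3_eq_dotProduct_self (u : Fin 3 → ℝ) : sq3 u = u ⬝ᵥ u := by
  simp only [sq3, dotProduct, Fin.sum_univ_three]
  ring

lemma skew_mulVec (u w : Fin 3 → ℝ) : skew u *ᵥ w = u ⨯₃ w := by
  ext i
  fin_cases i <;> simp [skew, mulVec, dotProduct, Fin.sum_univ_three, cross_apply] <;> ring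

lemma sq3_cross_of_sq3_eq_one {m : Fin 3 → ℝ} (hm : sq3 m = 1) (x : Fin 3 → ℝ) :
    sq3 (m ⨯₃ x) = sq3 x - (m ⬝ᵥ x) ^ 2 := by
  rw [sq3_eq_dotProduct_self, cross_dot_cross, ← sq3_eq_dotProduct_self, hm,
    ← sq3_eq_dotProduct_self, dotProduct_comm x m]
  ring

lemma sq_mul_le_sq3_cross_cross_e3 (r x : Fin 3 → ℝ) :
    r 2 ^ 2 * (x 0 ^ 2 + x 1 ^ 2) ≤ sq3 (r ⨯₃ (e3 ⨯₃ x)) := by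
  have h : sq3 (r ⨯₃ (e3 ⨯₃ x)) =
      r 2 ^ 2 * (x 0 ^ 2 + x 1 ^ 2) + (r 0 * x 0 + r 1 * x 1) ^ 2 := by
    simp [sq3, e3, cross_apply]
    ring
  rw [h]
  exact le_add_of_nonneg_right (sq_nonneg _)

lemma quadratic_nonneg_of_sq_le_mul {A B C : ℝ} (hA : 0 < A) (hB : B ^ 2 ≤ A * C) (x y : ℝ) :
    0 ≤ A * x ^ 2 + 2 * B * x * y + C * y ^ 2 := by
  have h : A * (A * x ^ 2 + 2 * B * x * y + C * y ^ 2) =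
      (A * x + B * y) ^ 2 + (A * C - B ^ 2) * y ^ 2 := by
    ring
  have : 0 ≤ A * (A * x ^ 2 + 2 * B * x * y + C * y ^ 2) := by
    rw [h]; nlinarith [sq_nonneg (A * x + B * y), sq_nonneg y]
  exact nonneg_of_mul_nonneg_right (by linarith) hA

lemma charPoly_nonneg {s t d μ : ℝ} (hst : s + t ^ 2 = 1) (hd : 0 < d) (hμ : 0 ≤ μ)
    (hμd : 2 * μ ≤ d) (hμs : μ * (2 * t ^ 2 + d) ≤ s * d) :
    0 ≤ μ ^ 2 - (1 + d) * μ + s * d := by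
  rcases le_or_gt d (2 - 4 * t ^ 2) with hsmall | hlarge
  · -- the polynomial decreases up to `(1 + d) / 2` and is `d (2 - 4t² - d) / 4 ≥ 0` at `d / 2`
    nlinarith [mul_nonneg (by linarith : 0 ≤ d / 2 - μ) (by linarith : 0 ≤ 1 + d / 2 - μ)]
  · have hL : 0 < 2 * t ^ 2 + d := by positivity
    set ν := s * d / (2 * t ^ 2 + d) with hν
    have hμν : μ ≤ ν := by rwa [hν, le_div_iff₀ hL]
    have hs : 0 ≤ s := by nlinarith
    have hν1 : ν ≤ 1 := by
      rw [hν, div_le_one hL]; nlinarith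
    have hfν : 0 ≤ ν ^ 2 - (1 + d) * ν + s * d := by
      have : ν ^ 2 - (1 + d) * ν + s * d =
          t ^ 2 * (d + 4 * t ^ 2 - 2) * (s * d) / (2 * t ^ 2 + d) ^ 2 := by
        rw [hν]; field_simp; linear_combination s * d * hst
      rw [this]
      have : 0 ≤ d + 4 * t ^ 2 - 2 := by linarith
      positivity
    nlinarith [mul_nonneg (sub_nonneg.2 hμν) (by linarith : 0 ≤ 1 + d - μ - ν)]

lemma mul_sq3_le_of_charPoly_nonneg {m : Fin 3 → ℝ} (hm : sq3 m = 1) (hs : 0 < m 0 ^ 2 + m 1 ^ 2)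
    {d μ : ℝ} (hd : 0 < d) (hμd : 2 * μ ≤ d)
    (hf : 0 ≤ μ ^ 2 - (1 + d) * μ + (m 0 ^ 2 + m 1 ^ 2) * d) (x : Fin 3 → ℝ) :
    μ * sq3 x ≤ sq3 x - (m ⬝ᵥ x) ^ 2 + d * (x 0 ^ 2 + x 1 ^ 2) := by
  set s := m 0 ^ 2 + m 1 ^ 2
  set t := m 2
  set a := x 0 ^ 2 + x 1 ^ 2
  set u := m 0 * x 0 + m 1 * x 1
  set v := x 2
  have hst : s + t ^ 2 = 1 := hm
  have hdot : m ⬝ᵥ x = u + t * v := by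
    simp only [dotProduct, Fin.sum_univ_three, u, t, v]
  have hx : sq3 x = a + v ^ 2 := rfl
  have hu : u ^ 2 ≤ s * a := by nlinarith [sq_nonneg (m 0 * x 1 - m 1 * x 0)]
  have hdet : s * t ^ 2 ≤ (t ^ 2 + d - μ) * (s - μ) := by nlinarith
  have hbox : 0 ≤ (t ^ 2 + d - μ) * u ^ 2 + 2 * (-(s * t)) * u * v + s * (s - μ) * v ^ 2 :=
    quadratic_nonneg_of_sq_le_mul (by nlinarith) (by nlinarith) u v
  -- `u = √s · y` with `y` the component of `x` along `(m₁, m₂) / √s`; scaling by `s` avoids `√s`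
  have hsplit : s * (sq3 x - (m ⬝ᵥ x) ^ 2 + d * a - μ * sq3 x) =
      (1 + d - μ) * (s * a - u ^ 2) +
        ((t ^ 2 + d - μ) * u ^ 2 + 2 * (-(s * t)) * u * v + s * (s - μ) * v ^ 2) := by
    rw [hdot, hx]
    linear_combination (-(s * v ^ 2 + u ^ 2)) * hst
  have : 0 ≤ s * (sq3 x - (m ⬝ᵥ x) ^ 2 + d * a - μ * sq3 x) := by
    rw [hsplit]
    nlinarith [mul_nonneg (by linarith : 0 ≤ 1 + d - μ) (sub_nonneg.2 hu)]
  linarith [nonneg_of_mul_nonneg_right this hs]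

theorem stmt7_general (m : Fin 3 → ℝ)
    (hm : m 0 ^ 2 + m 1 ^ 2 + m 2 ^ 2 = 1)
    (hnc : m 0 ^ 2 + m 1 ^ 2 > 0)
    (R : Matrix (Fin 3) (Fin 3) ℝ)
    (ρ c : ℝ) (hρ : 0 < ρ) (hR33 : |R 2 2| ≥ ρ) (hc : 0 < c) :
    0 < min (c * ρ ^ 2 / 2) ((m 0 ^ 2 + m 1 ^ 2) * (c * ρ ^ 2) / (2 * m 2 ^ 2 + c * ρ ^ 2)) ∧
    ∀ x : Fin 3 → ℝ,
      sq3 (crossProduct m x) + c * sq3 ((skew (R.mulVec e3) * skew e3).mulVec x) ≥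
        min (c * ρ ^ 2 / 2) ((m 0 ^ 2 + m 1 ^ 2) * (c * ρ ^ 2) / (2 * m 2 ^ 2 + c * ρ ^ 2))
          * sq3 x := by
  have hd : 0 < c * ρ ^ 2 := by positivity
  set μ := min (c * ρ ^ 2 / 2) ((m 0 ^ 2 + m 1 ^ 2) * (c * ρ ^ 2) / (2 * m 2 ^ 2 + c * ρ ^ 2))
  have hμ : 0 < μ := lt_min (by positivity) (by positivity)
  have hμd : 2 * μ ≤ c * ρ ^ 2 := by linarith [show μ ≤ c * ρ ^ 2 / 2 from min_le_left _ _]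
  have hμs : μ * (2 * m 2 ^ 2 + c * ρ ^ 2) ≤ (m 0 ^ 2 + m 1 ^ 2) * (c * ρ ^ 2) :=
    (le_div_iff₀ (by positivity)).1 (min_le_right _ _)
  have hf := charPoly_nonneg hm hd hμ.le hμd hμs
  refine ⟨hμ, fun x => ?_⟩
  have hρR : ρ ^ 2 ≤ (R *ᵥ e3) 2 ^ 2 := by
    have : (R *ᵥ e3) 2 = R 2 2 := by simp [e3, mulVec, dotProduct, Fin.sum_univ_three]
    rw [this, sq_le_sq, abs_of_pos hρ]
    exact hR33
  have hskew : c * ρ ^ 2 * (x 0 ^ 2 + x 1 ^ 2) ≤ c * sq3 ((R *ᵥ e3) ⨯₃ (e3 ⨯₃ x)) := by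
    rw [mul_assoc]
    gcongr
    exact (mul_le_mul_of_nonneg_right hρR (by positivity)).trans
      (sq_mul_le_sq3_cross_cross_e3 _ x)
  rw [← mulVec_mulVec, skew_mulVec, skew_mulVec, sq3_cross_of_sq3_eq_one hm]
  linarith [mul_sq3_le_of_charPoly_nonneg hm hnc hd hμd hf x]

/-- For a unit vector `m` not collinear with `e₃`, `R ∈ SO(3)` with `|R₃₃| ≥ ρ > 0`, `c > 0`:
`|m × x|² + c |[R e₃]_× [e₃]_× x|² ≥ μ |x|²` with
`μ := min(cρ²/2, (m₁²+m₂²)cρ²/(2m₃²+cρ²)) > 0`. -/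
theorem stmt7 (m : Fin 3 → ℝ)
    (hm : m 0 ^ 2 + m 1 ^ 2 + m 2 ^ 2 = 1)
    (hnc : m 0 ^ 2 + m 1 ^ 2 > 0)
    (R : Matrix (Fin 3) (Fin 3) ℝ) (hO : Rᵀ * R = 1) (hdet : R.det = 1)
    (ρ c : ℝ) (hρ : 0 < ρ) (hR33 : |R 2 2| ≥ ρ) (hc : 0 < c) :
    0 < min (c * ρ ^ 2 / 2) ((m 0 ^ 2 + m 1 ^ 2) * (c * ρ ^ 2) / (2 * m 2 ^ 2 + c * ρ ^ 2)) ∧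
    ∀ x : Fin 3 → ℝ,
      sq3 (crossProduct m x) + c * sq3 ((skew (R.mulVec e3) * skew e3).mulVec x) ≥
        min (c * ρ ^ 2 / 2) ((m 0 ^ 2 + m 1 ^ 2) * (c * ρ ^ 2) / (2 * m 2 ^ 2 + c * ρ ^ 2))
          * sq3 x :=
  stmt7_general m hm hnc R ρ c hρ hR33 hc
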